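/- Let Φ : M_n → M_n be a positive, unital, trace-preserving linear map. Then for every Hermitian X and every p ≥ 1, Tr[|Φ(X)|^p] ≤ Tr[|X|^p]. -/

import Mathlib

open Matrix ComplexOrder

noncomputable def mlog {n : Type*} [Fintype n] [DecidableEq n] (A : Matrix n n ℂ) : Matrix n n ℂ :=
  cfc Real.log A

noncomputable def rtr {n : Type*} [Fintype n] [DecidableEq n] (A : Matrix n n ℂ) : ℝ :=
  A.trace.re

/-- `Tr[|A|^p]` where `|A| = (A^* A)^{1/2}`. -/
noncomputable def traceAbsPow {n : Type*} [Fintype n] [DecidableEq n]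
    (A : Matrix n n ℂ) (p : ℝ) : ℝ :=
  rtr (cfc (fun x : ℝ => x ^ (p / 2)) (Aᴴ * A))

/-!
Write `X = ∑ⱼ λⱼ uⱼuⱼ*` and let `(vᵢ)` be an orthonormal eigenbasis of `Φ X`, which is Hermitian
because `Φ` is positive. The eigenvalues of `Φ X` are `μᵢ = ∑ⱼ wᵢⱼ λⱼ` with
`wᵢⱼ = ⟨vᵢ, Φ(uⱼuⱼ*) vᵢ⟩ ≥ 0`; unitality makes the rows of `w` sum to one and trace preservation
its columns. Since `Tr |A|^p = ∑ᵢ |eigᵢ A|^p` for Hermitian `A`, Jensen's inequality for the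
convex function `t ↦ |t|^p` along each row of the doubly stochastic matrix `w` gives the claim.
-/

theorem convexOn_abs_rpow {p : ℝ} (hp : 1 ≤ p) : ConvexOn ℝ Set.univ fun x : ℝ => |x| ^ p := by
  have himage : (norm : ℝ → ℝ) '' Set.univ = Set.Ici 0 := by
    ext y
    simp only [Set.image_univ, Set.mem_range, Set.mem_Ici, Real.norm_eq_abs]
    exact ⟨by rintro ⟨x, rfl⟩; exact abs_nonneg x, fun hy => ⟨y, abs_of_nonneg hy⟩⟩
  have := ConvexOn.comp (g := fun x : ℝ => x ^ p) (himage ▸ convexOn_rpow hp) convexOn_univ_norm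
    (himage ▸ Real.monotoneOn_rpow_Ici_of_exponent_nonneg (by linarith))
  simpa only [Function.comp_def, Real.norm_eq_abs] using this

section DoublyStochastic

variable {𝕜 β n : Type*} [Field 𝕜] [LinearOrder 𝕜] [IsStrictOrderedRing 𝕜]
  [AddCommGroup β] [PartialOrder β] [IsOrderedAddMonoid β] [Module 𝕜 β] [IsStrictOrderedModule 𝕜 β]
  [Fintype n] [DecidableEq n]

theorem ConvexOn.sum_comp_mulVec_le {s : Set 𝕜} {f : 𝕜 → β} (hf : ConvexOn 𝕜 s f)
    {M : Matrix n n 𝕜} (hM : M ∈ doublyStochastic 𝕜 n) {x : n → 𝕜} (hx : ∀ j, x j ∈ s) :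
    ∑ i, f ((M *ᵥ x) i) ≤ ∑ j, f (x j) :=
  calc ∑ i, f ((M *ᵥ x) i)
      ≤ ∑ i, ∑ j, M i j • f (x j) := Finset.sum_le_sum fun i _ =>
        hf.map_sum_le (fun j _ => nonneg_of_mem_doublyStochastic hM)
          (sum_row_of_mem_doublyStochastic hM i) (fun j _ => hx j)
    _ = ∑ j, f (x j) := by
        rw [Finset.sum_comm]
        simp only [← Finset.sum_smul, sum_col_of_mem_doublyStochastic hM, one_smul]

end DoublyStochastic

namespace Matrix

variable {n : Type*} [Fintype n] [DecidableEq n]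

theorem IsHermitian.eq_mul_diagonal_mul_conjTranspose {𝕜 : Type*} [RCLike 𝕜] {A : Matrix n n 𝕜}
    (hA : A.IsHermitian) :
    A = (hA.eigenvectorUnitary : Matrix n n 𝕜) * diagonal (RCLike.ofReal ∘ hA.eigenvalues) *
      (hA.eigenvectorUnitary : Matrix n n 𝕜)ᴴ :=
  hA.spectral_theorem

theorem IsHermitian.eigenvalues_eq_re_conjTranspose_mul_mul {A : Matrix n n ℂ}
    (hA : A.IsHermitian) (i : n) :
    hA.eigenvalues i =
      (((hA.eigenvectorUnitary : Matrix n n ℂ)ᴴ * A * hA.eigenvectorUnitary) i i).re := by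
  have h := congr($(hA.conjStarAlgAut_star_eigenvectorUnitary) i i)
  rw [Unitary.conjStarAlgAut_star_apply] at h
  simp [← star_eq_conjTranspose, h]

theorem IsHermitian.trace_cfc {𝕜 : Type*} [RCLike 𝕜] {A : Matrix n n 𝕜} (hA : A.IsHermitian)
    (f : ℝ → ℝ) : (cfc f A).trace = ∑ i, (f (hA.eigenvalues i) : 𝕜) := by
  rw [hA.cfc_eq, IsHermitian.cfc, Unitary.conjStarAlgAut_apply, trace_mul_cycle,
    Unitary.coe_star_mul_self, one_mul, trace_diagonal]
  rfl

theorem IsHermitian.traceAbsPow_eq {A : Matrix n n ℂ} (hA : A.IsHermitian) (p : ℝ) :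
    traceAbsPow A p = ∑ i, |hA.eigenvalues i| ^ p := by
  have hsq : Aᴴ * A = A ^ 2 := by rw [hA.eq, sq]
  rw [traceAbsPow, rtr, hsq, ← cfc_comp_pow _ 2 A ((A.finite_real_spectrum.image _).continuousOn _)
    hA.isSelfAdjoint, hA.trace_cfc, Complex.re_sum]
  refine Finset.sum_congr rfl fun i _ => ?_
  simp only [Complex.coe_algebraMap, Complex.ofReal_re]
  rw [← sq_abs, ← Real.rpow_natCast, ← Real.rpow_mul (abs_nonneg _)]
  congr 1
  ring

theorem mul_diagonal_mul_eq_sum_smul {α : Type*} [CommSemiring α] (U W : Matrix n n α)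
    (d : n → α) : U * diagonal d * W = ∑ j, d j • (U * single j j 1 * W) := by
  rw [← sum_single_eq_diagonal, Finset.mul_sum, Finset.sum_mul]
  refine Finset.sum_congr rfl fun j _ => ?_
  rw [← Matrix.smul_mul, ← Matrix.mul_smul, smul_single, smul_eq_mul, mul_one]

theorem posSemidef_mul_single_mul_conjTranspose (U : Matrix n n ℂ) (j : n) :
    (U * single j j 1 * Uᴴ).PosSemidef := by
  rw [← diagonal_single]
  exact (PosSemidef.diagonal (Pi.single_nonneg.2 zero_le_one)).mul_mul_conjTranspose_same U

theorem trace_conjTranspose_mul_mul_of_mem_unitaryGroup {U : Matrix n n ℂ}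
    (hU : U ∈ unitaryGroup n ℂ) (A : Matrix n n ℂ) : (Uᴴ * A * U).trace = A.trace := by
  rw [trace_mul_cycle, ← star_eq_conjTranspose, mem_unitaryGroup_iff.1 hU, one_mul]

variable {Φ : Matrix n n ℂ →ₗ[ℂ] Matrix n n ℂ}

theorem IsHermitian.map_of_map_posSemidef
    (hpos : ∀ A : Matrix n n ℂ, A.PosSemidef → (Φ A).PosSemidef) {X : Matrix n n ℂ}
    (hX : X.IsHermitian) : (Φ X).IsHermitian := by
  rw [hX.eq_mul_diagonal_mul_conjTranspose, mul_diagonal_mul_eq_sum_smul, map_sum]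
  refine isSelfAdjoint_sum _ fun j _ => ?_
  rw [map_smul]
  exact (hpos _ (posSemidef_mul_single_mul_conjTranspose _ j)).isHermitian.smul
    (Complex.conj_ofReal _)

variable (Φ) in
noncomputable def transitionMatrix (U V : Matrix n n ℂ) : Matrix n n ℝ :=
  of fun i j => (Vᴴ * Φ (U * single j j 1 * Uᴴ) * V) i i |>.re

theorem transitionMatrix_mulVec (U V : Matrix n n ℂ) (d : n → ℝ) (i : n) :
    (transitionMatrix Φ U V *ᵥ d) i =
      ((Vᴴ * Φ (U * diagonal (RCLike.ofReal ∘ d) * Uᴴ) * V) i i).re := by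
  simp only [mul_diagonal_mul_eq_sum_smul, map_sum, map_smul, Finset.mul_sum, Finset.sum_mul,
    Matrix.mul_smul, Matrix.smul_mul, sum_apply, smul_apply, smul_eq_mul, Complex.re_sum,
    Complex.re_ofReal_mul, mulVec, dotProduct, transitionMatrix, of_apply, mul_comm,
    Function.comp_apply, Complex.coe_algebraMap]

theorem transitionMatrix_mem_doublyStochastic
    (hpos : ∀ A : Matrix n n ℂ, A.PosSemidef → (Φ A).PosSemidef) (hunital : Φ 1 = 1)
    (htr : ∀ A : Matrix n n ℂ, (Φ A).trace = A.trace) {U V : Matrix n n ℂ}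
    (hU : U ∈ unitaryGroup n ℂ) (hV : V ∈ unitaryGroup n ℂ) :
    transitionMatrix Φ U V ∈ doublyStochastic ℝ n := by
  refine ⟨fun i j => ?_, funext fun i => ?_, funext fun j => ?_⟩
  · have hpsd := (hpos _ (posSemidef_mul_single_mul_conjTranspose U j)).conjTranspose_mul_mul_same V
    exact (Complex.nonneg_iff.1 (hpsd.diag_nonneg (i := i))).1
  · have hUU : U * Uᴴ = 1 := mem_unitaryGroup_iff.1 hU
    have hVV : Vᴴ * V = 1 := mem_unitaryGroup_iff'.1 hV
    rw [transitionMatrix_mulVec]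
    simp [hUU, hunital, hVV]
  · have hUU : Uᴴ * U = 1 := mem_unitaryGroup_iff'.1 hU
    have htrace : (Vᴴ * Φ (U * single j j 1 * Uᴴ) * V).trace = 1 := by
      rw [trace_conjTranspose_mul_mul_of_mem_unitaryGroup hV, htr, trace_mul_cycle, hUU, one_mul,
        trace_single_eq_same]
    simpa [vecMul, dotProduct, transitionMatrix, trace] using congrArg Complex.re htrace

end Matrix

theorem stmt17 {n : Type*} [Fintype n] [DecidableEq n]
    (Φ : Matrix n n ℂ →ₗ[ℂ] Matrix n n ℂ)
    (hpos : ∀ A : Matrix n n ℂ, A.PosSemidef → (Φ A).PosSemidef)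
    (hunital : Φ 1 = 1)
    (htr : ∀ A : Matrix n n ℂ, (Φ A).trace = A.trace)
    (X : Matrix n n ℂ) (hX : X.IsHermitian) (p : ℝ) (hp : 1 ≤ p) :
    traceAbsPow (Φ X) p ≤ traceAbsPow X p := by
  have hY := hX.map_of_map_posSemidef hpos
  set U := hX.eigenvectorUnitary
  set V := hY.eigenvectorUnitary
  have hμ : hY.eigenvalues = transitionMatrix Φ U V *ᵥ hX.eigenvalues := by
    ext i
    rw [transitionMatrix_mulVec, ← hX.eq_mul_diagonal_mul_conjTranspose,
      hY.eigenvalues_eq_re_conjTranspose_mul_mul]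
  rw [hX.traceAbsPow_eq, hY.traceAbsPow_eq, hμ]
  exact (convexOn_abs_rpow hp).sum_comp_mulVec_le
    (transitionMatrix_mem_doublyStochastic hpos hunital htr U.2 V.2) fun _ => Set.mem_univ _
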